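/- For λ < 0, the quantile function of the skew normal SN(λ) satisfies F⁻¹(u) ~ -√( -2 log( (u/2)√(-4π log((u/2)√(2π))) ) ) as u → 0⁺; in particular F⁻¹(u) ~ -√(-2 log u). -/

import Mathlib

/-!
For `l ≤ 0` and `z ≤ 0` the skew-normal cdf is squeezed between `Φ(z)` (because `Φ(l t) ≥ 1/2`
for `t ≤ 0`) and `2 Φ(z)`, while the Gaussian tail satisfies `φ(z - 1) ≤ Φ(z) ≤ exp(-z²/2)`.
Taking logarithms at `u = F(Q u)` gives `-2 log u - log 2π ≤ (1 - Q u)²` and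
`(Q u)² ≤ -2 log u + 2 log 2`, so `-Q u ~ √(-2 log u)`. The refined normalizer is
`-2 log u + 2 log 2 - log (2π (-2 log u) + O(1))`, which is also asymptotic to `-2 log u`.
-/

open Real MeasureTheory Filter Set

noncomputable def stdNormalPdf (t : ℝ) : ℝ := (Real.sqrt (2 * π))⁻¹ * Real.exp (-t ^ 2 / 2)

noncomputable def stdNormalCdf (z : ℝ) : ℝ := ∫ t in Set.Iic z, stdNormalPdf t

noncomputable def skewNormalCdf (l z : ℝ) : ℝ :=
  ∫ t in Set.Iic z, 2 * stdNormalPdf t * stdNormalCdf (l * t)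

open Topology

theorem stdNormalPdf_eq_gaussianPDFReal :
    stdNormalPdf = ProbabilityTheory.gaussianPDFReal 0 1 := by
  ext t
  simp [stdNormalPdf, ProbabilityTheory.gaussianPDFReal]

theorem stdNormalPdf_pos (t : ℝ) : 0 < stdNormalPdf t := by
  unfold stdNormalPdf; positivity

theorem stdNormalPdf_neg (t : ℝ) : stdNormalPdf (-t) = stdNormalPdf t := by
  simp [stdNormalPdf]

theorem integrable_stdNormalPdf : Integrable stdNormalPdf := by
  rw [stdNormalPdf_eq_gaussianPDFReal]
  exact ProbabilityTheory.integrable_gaussianPDFReal 0 1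

theorem integral_stdNormalPdf : ∫ t, stdNormalPdf t = 1 := by
  rw [stdNormalPdf_eq_gaussianPDFReal]
  exact ProbabilityTheory.integral_gaussianPDFReal_eq_one 0 one_ne_zero

theorem monotone_stdNormalCdf : Monotone stdNormalCdf := fun _ _ hab =>
  setIntegral_mono_set integrable_stdNormalPdf.integrableOn
    (.of_forall fun t => (stdNormalPdf_pos t).le) (Iic_subset_Iic.2 hab).eventuallyLE

theorem stdNormalCdf_nonneg (z : ℝ) : 0 ≤ stdNormalCdf z :=
  setIntegral_nonneg measurableSet_Iic fun t _ => (stdNormalPdf_pos t).le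

theorem stdNormalCdf_le_one (z : ℝ) : stdNormalCdf z ≤ 1 :=
  integral_stdNormalPdf ▸ setIntegral_le_integral integrable_stdNormalPdf
    (.of_forall fun t => (stdNormalPdf_pos t).le)

theorem stdNormalCdf_zero : stdNormalCdf 0 = 1 / 2 := by
  have hIoi : ∫ t in Ioi 0, stdNormalPdf t = stdNormalCdf 0 := by
    rw [stdNormalCdf, ← neg_zero, ← integral_comp_neg_Iic]
    simp only [stdNormalPdf_neg, neg_zero]
  have h := intervalIntegral.integral_Iic_add_Ioi (b := 0)
    integrable_stdNormalPdf.integrableOn integrable_stdNormalPdf.integrableOn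
  rw [integral_stdNormalPdf, hIoi] at h
  change stdNormalCdf 0 + stdNormalCdf 0 = 1 at h
  linarith

theorem stdNormalPdf_sub_one_le_stdNormalCdf {z : ℝ} (hz : z ≤ 0) :
    stdNormalPdf (z - 1) ≤ stdNormalCdf z := by
  have hmono : ∀ t ∈ Ioc (z - 1) z, stdNormalPdf (z - 1) ≤ stdNormalPdf t := by
    intro t ⟨ht₁, ht₂⟩
    unfold stdNormalPdf
    gcongr ?_ * exp ?_
    nlinarith
  calc stdNormalPdf (z - 1) = ∫ _ in Ioc (z - 1) z, stdNormalPdf (z - 1) := by simp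
    _ ≤ ∫ t in Ioc (z - 1) z, stdNormalPdf t :=
        setIntegral_mono_on (integrableOn_const (by simp))
          integrable_stdNormalPdf.integrableOn measurableSet_Ioc hmono
    _ ≤ stdNormalCdf z :=
        setIntegral_mono_set integrable_stdNormalPdf.integrableOn
          (.of_forall fun t => (stdNormalPdf_pos t).le) Ioc_subset_Iic_self.eventuallyLE

theorem stdNormalCdf_le_exp {z : ℝ} (hz : z ≤ 0) : stdNormalCdf z ≤ exp (-z ^ 2 / 2) := by
  -- for `t ≤ z ≤ 0` we have `t² ≥ z² + (t - z)²`
  have hpt : ∀ t ∈ Iic z, stdNormalPdf t ≤ exp (-z ^ 2 / 2) * stdNormalPdf (t - z) := by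
    intro t ht
    have ht : t ≤ z := ht
    rw [stdNormalPdf, stdNormalPdf, mul_left_comm, ← exp_add]
    gcongr
    nlinarith
  have hshift : Integrable fun t => stdNormalPdf (t - z) :=
    integrable_stdNormalPdf.comp_sub_right z
  calc stdNormalCdf z ≤ ∫ t in Iic z, exp (-z ^ 2 / 2) * stdNormalPdf (t - z) :=
        setIntegral_mono_on integrable_stdNormalPdf.integrableOn
          (hshift.const_mul _).integrableOn measurableSet_Iic hpt
    _ ≤ ∫ t, exp (-z ^ 2 / 2) * stdNormalPdf (t - z) :=
        setIntegral_le_integral (hshift.const_mul _)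
          (.of_forall fun t => by have := stdNormalPdf_pos (t - z); positivity)
    _ = exp (-z ^ 2 / 2) := by
        rw [integral_const_mul, integral_sub_right_eq_self stdNormalPdf z,
          integral_stdNormalPdf, mul_one]

noncomputable def skewNormalPdf (l t : ℝ) : ℝ := 2 * stdNormalPdf t * stdNormalCdf (l * t)

theorem skewNormalPdf_nonneg (l t : ℝ) : 0 ≤ skewNormalPdf l t := by
  have := stdNormalPdf_pos t
  have := stdNormalCdf_nonneg (l * t)
  unfold skewNormalPdf; positivity

theorem skewNormalPdf_le (l t : ℝ) : skewNormalPdf l t ≤ 2 * stdNormalPdf t :=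
  mul_le_of_le_one_right (by have := stdNormalPdf_pos t; positivity) (stdNormalCdf_le_one _)

theorem stdNormalPdf_le_skewNormalPdf {l t : ℝ} (hl : l ≤ 0) (ht : t ≤ 0) :
    stdNormalPdf t ≤ skewNormalPdf l t := by
  have hhalf : 1 / 2 ≤ stdNormalCdf (l * t) :=
    stdNormalCdf_zero ▸ monotone_stdNormalCdf (mul_nonneg_of_nonpos_of_nonpos hl ht)
  have := stdNormalPdf_pos t
  unfold skewNormalPdf; nlinarith

theorem integrable_skewNormalPdf (l : ℝ) : Integrable (skewNormalPdf l) :=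
  (integrable_stdNormalPdf.const_mul 2).mono'
    ((continuous_const.mul (by unfold stdNormalPdf; fun_prop)).measurable.mul
      (monotone_stdNormalCdf.measurable.comp (measurable_const_mul l))).aestronglyMeasurable
    (.of_forall fun t => by
      rw [norm_of_nonneg (skewNormalPdf_nonneg l t)]; exact skewNormalPdf_le l t)

theorem monotone_skewNormalCdf (l : ℝ) : Monotone (skewNormalCdf l) := fun _ _ hab =>
  setIntegral_mono_set (integrable_skewNormalPdf l).integrableOn
    (.of_forall (skewNormalPdf_nonneg l)) (Iic_subset_Iic.2 hab).eventuallyLE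

theorem skewNormalCdf_le_two_mul_stdNormalCdf (l z : ℝ) :
    skewNormalCdf l z ≤ 2 * stdNormalCdf z := by
  rw [stdNormalCdf, ← integral_const_mul]
  exact setIntegral_mono_on (integrable_skewNormalPdf l).integrableOn
    (integrable_stdNormalPdf.const_mul 2).integrableOn measurableSet_Iic
    fun t _ => skewNormalPdf_le l t

theorem stdNormalCdf_le_skewNormalCdf {l z : ℝ} (hl : l ≤ 0) (hz : z ≤ 0) :
    stdNormalCdf z ≤ skewNormalCdf l z :=
  setIntegral_mono_on integrable_stdNormalPdf.integrableOn
    (integrable_skewNormalPdf l).integrableOn measurableSet_Iic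
    fun _ ht => stdNormalPdf_le_skewNormalPdf hl (le_trans ht hz)

theorem nonpos_of_skewNormalCdf_lt_half {l z : ℝ} (hl : l ≤ 0) (h : skewNormalCdf l z < 1 / 2) :
    z ≤ 0 := by
  by_contra! hz
  have := (stdNormalCdf_le_skewNormalCdf hl le_rfl).trans (monotone_skewNormalCdf l hz.le)
  linarith [stdNormalCdf_zero]

theorem sq_le_of_skewNormalCdf_eq {l z u : ℝ} (hz : z ≤ 0) (hu : 0 < u)
    (h : skewNormalCdf l z = u) : z ^ 2 ≤ -2 * log u + 2 * log 2 := by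
  have hle : u ≤ 2 * exp (-z ^ 2 / 2) :=
    h ▸ (skewNormalCdf_le_two_mul_stdNormalCdf l z).trans (by gcongr; exact stdNormalCdf_le_exp hz)
  have := log_le_log hu hle
  rw [log_mul two_ne_zero (exp_ne_zero _), log_exp] at this
  linarith

theorem le_sq_of_skewNormalCdf_eq {l z u : ℝ} (hl : l ≤ 0) (hz : z ≤ 0)
    (h : skewNormalCdf l z = u) : -2 * log u - log (2 * π) ≤ (1 - z) ^ 2 := by
  have hle : stdNormalPdf (z - 1) ≤ u :=
    h ▸ (stdNormalPdf_sub_one_le_stdNormalCdf hz).trans (stdNormalCdf_le_skewNormalCdf hl hz)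
  have := log_le_log (stdNormalPdf_pos _) hle
  rw [stdNormalPdf, log_mul (by positivity) (exp_ne_zero _), log_inv, log_exp,
    log_sqrt (by positivity)] at this
  nlinarith

theorem tendsto_sqrt_add_div_sqrt_atTop (c : ℝ) :
    Tendsto (fun t => √(t + c) / √t) atTop (𝓝 1) := by
  have h : Tendsto (fun t => 1 + c / t) atTop (𝓝 1) := by
    simpa using (tendsto_const_nhds (x := (1 : ℝ))).add
      ((tendsto_const_nhds (x := c)).div_atTop tendsto_id)
  have h' := (continuous_sqrt.tendsto 1).comp h
  rw [Function.comp_def, sqrt_one] at h'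
  refine h'.congr' ?_
  filter_upwards [eventually_gt_atTop 0] with t ht
  rw [← sqrt_div' _ ht.le, add_div, div_self ht.ne']

theorem tendsto_div_sqrt_of_sq_bounds {α : Type*} {f : Filter α} {y w : α → ℝ} (c d : ℝ)
    (hy : Tendsto y f atTop) (hw : ∀ᶠ x in f, 0 ≤ w x)
    (hlo : ∀ᶠ x in f, y x - c ≤ (1 + w x) ^ 2) (hhi : ∀ᶠ x in f, w x ^ 2 ≤ y x + d) :
    Tendsto (fun x => w x / √(y x)) f (𝓝 1) := by
  have hlim : Tendsto (fun x => √(y x + -c) / √(y x) - 1 / √(y x)) f (𝓝 1) := by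
    simpa using ((tendsto_sqrt_add_div_sqrt_atTop (-c)).comp hy).sub
      ((tendsto_sqrt_atTop.inv_tendsto_atTop).comp hy)
  refine tendsto_of_tendsto_of_tendsto_of_le_of_le' hlim
    ((tendsto_sqrt_add_div_sqrt_atTop d).comp hy) ?_ ?_
  · filter_upwards [hw, hlo] with x hw hlo
    rw [← sub_div]
    refine div_le_div_of_nonneg_right ?_ (sqrt_nonneg _)
    rw [sub_le_iff_le_add, ← sub_eq_add_neg, add_comm]
    simpa [sqrt_sq (by linarith : 0 ≤ 1 + w x)] using sqrt_le_sqrt hlo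
  · filter_upwards [hw, hhi] with x hw hhi
    refine div_le_div_of_nonneg_right ?_ (sqrt_nonneg _)
    simpa [sqrt_sq hw] using sqrt_le_sqrt hhi

theorem tendsto_add_sub_log_div_atTop (a c : ℝ) {b : ℝ} (hb : 0 < b) :
    Tendsto (fun t => (t + a - log (b * t + c)) / t) atTop (𝓝 1) := by
  have haff : Tendsto (fun t => b * t + c) atTop atTop :=
    tendsto_atTop_add_const_right _ c (tendsto_id.const_mul_atTop hb)
  have hlog : (fun t => log (b * t + c)) =o[atTop] id :=
    (isLittleO_log_id_atTop.comp_tendsto haff).trans_isBigO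
      (((Asymptotics.isBigO_refl _ _).const_mul_left b).add
        (Asymptotics.isLittleO_const_id_atTop c).isBigO)
  have h := ((tendsto_const_nhds (x := (1 : ℝ))).add
    ((tendsto_const_nhds (x := a)).div_atTop tendsto_id)).sub hlog.tendsto_div_nhds_zero
  rw [add_zero, sub_zero] at h
  refine h.congr' ?_
  filter_upwards [eventually_gt_atTop 0] with t ht
  simp only [id]
  field_simp

theorem tendsto_div_sqrt_of_tendsto_div {α : Type*} {f : Filter α} {y w B : α → ℝ}
    (hy : ∀ᶠ x in f, 0 < y x) (hw : Tendsto (fun x => w x / √(y x)) f (𝓝 1))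
    (hB : Tendsto (fun x => B x / y x) f (𝓝 1)) :
    Tendsto (fun x => w x / √(B x)) f (𝓝 1) := by
  have hsqrt : Tendsto (fun x => √(y x / B x)) f (𝓝 1) := by
    have h := hB.inv₀ one_ne_zero
    rw [inv_one] at h
    simpa only [Function.comp_def, inv_div, sqrt_one] using (continuous_sqrt.tendsto 1).comp h
  have h := hw.mul hsqrt
  rw [mul_one] at h
  refine h.congr' ?_
  filter_upwards [hy] with x hx
  rw [sqrt_div hx.le, div_mul_div_cancel₀ (sqrt_pos.2 hx).ne']

theorem tendsto_neg_two_mul_log_nhdsGT_zero :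
    Tendsto (fun u => -2 * log u) (𝓝[>] 0) atTop :=
  tendsto_neg_atBot_atTop.comp (tendsto_log_nhdsGT_zero.const_mul_atBot two_pos) |>.congr
    fun u => by simp only [Function.comp_apply]; ring

theorem tendsto_skewNormal_quantile_div_sqrt {l : ℝ} (hl : l ≤ 0) {Q : ℝ → ℝ}
    (hQ : ∀ u ∈ Ioo (0 : ℝ) 1, skewNormalCdf l (Q u) = u) :
    Tendsto (fun u => -Q u / √(-2 * log u)) (𝓝[>] 0) (𝓝 1) := by
  have hsmall : ∀ᶠ u in 𝓝[>] (0 : ℝ), u ∈ Ioo 0 (1 / 2) := Ioo_mem_nhdsGT (by norm_num)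
  have hcdf : ∀ᶠ u in 𝓝[>] (0 : ℝ), skewNormalCdf l (Q u) = u :=
    hsmall.mono fun u hu => hQ u ⟨hu.1, hu.2.trans (by norm_num)⟩
  have hnonpos : ∀ᶠ u in 𝓝[>] (0 : ℝ), Q u ≤ 0 := by
    filter_upwards [hsmall, hcdf] with u hu hQu
    exact nonpos_of_skewNormalCdf_lt_half hl (hQu.trans_lt hu.2)
  refine tendsto_div_sqrt_of_sq_bounds (log (2 * π)) (2 * log 2)
    tendsto_neg_two_mul_log_nhdsGT_zero (hnonpos.mono fun u => neg_nonneg.2) ?_ ?_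
  · filter_upwards [hnonpos, hcdf] with u hQu hu
    simpa [← sub_eq_add_neg] using le_sq_of_skewNormalCdf_eq hl hQu hu
  · filter_upwards [hsmall, hnonpos, hcdf] with u hu hQu hu'
    simpa using sq_le_of_skewNormalCdf_eq hQu hu.1 hu'

theorem tendsto_quantile_normalizer_div :
    Tendsto (fun u => -2 * log ((u / 2) * √(-(4 * π) * log ((u / 2) * √(2 * π)))) /
      (-2 * log u)) (𝓝[>] 0) (𝓝 1) := by
  set c := 4 * π * (log 2 - log √(2 * π))
  have hy := tendsto_neg_two_mul_log_nhdsGT_zero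
  have hinner : ∀ᶠ u in 𝓝[>] (0 : ℝ),
      -(4 * π) * log ((u / 2) * √(2 * π)) = 2 * π * (-2 * log u) + c := by
    filter_upwards [self_mem_nhdsWithin] with u (hu : 0 < u)
    rw [log_mul (by positivity) (by positivity), log_div hu.ne' two_ne_zero]
    ring
  have hpos : ∀ᶠ u in 𝓝[>] (0 : ℝ), 0 < 2 * π * (-2 * log u) + c :=
    (tendsto_atTop_add_const_right _ c (hy.const_mul_atTop (by positivity))).eventually_gt_atTop 0
  refine ((tendsto_add_sub_log_div_atTop (2 * log 2) c (b := 2 * π) (by positivity)).comp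
    hy).congr' ?_
  filter_upwards [self_mem_nhdsWithin, hinner, hpos] with u (hu : 0 < u) hinner hpos
  rw [Function.comp_apply, hinner, log_mul (by positivity) (sqrt_pos.2 hpos).ne',
    log_div hu.ne' two_ne_zero, log_sqrt hpos.le]
  ring

/-- For l < 0, the quantile function of SN(l) satisfies
F⁻¹(u) ~ -√(-2 log((u/2)√(-4π log((u/2)√(2π))))) as u → 0⁺,
and in particular F⁻¹(u) ~ -√(-2 log u). -/
theorem skewNormal_quantile_asymp_neg (l : ℝ) (hl : l < 0) (Q : ℝ → ℝ)
    (hQ : ∀ u ∈ Set.Ioo (0 : ℝ) 1, skewNormalCdf l (Q u) = u) :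
    Tendsto (fun u : ℝ =>
      Q u / (-Real.sqrt (-2 *
        Real.log ((u / 2) * Real.sqrt (-(4 * π) * Real.log ((u / 2) * Real.sqrt (2 * π)))))))
      (nhdsWithin 0 (Set.Ioi 0)) (nhds 1) ∧
    Tendsto (fun u : ℝ => Q u / (-Real.sqrt (-2 * Real.log u)))
      (nhdsWithin 0 (Set.Ioi 0)) (nhds 1) := by
  have hquantile := tendsto_skewNormal_quantile_div_sqrt hl.le hQ
  have hnormalizer := tendsto_div_sqrt_of_tendsto_div
    (tendsto_neg_two_mul_log_nhdsGT_zero.eventually_gt_atTop 0) hquantile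
    tendsto_quantile_normalizer_div
  simp only [div_neg_eq_neg_div, neg_div] at hquantile hnormalizer ⊢
  exact ⟨hnormalizer, hquantile⟩
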